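/- arXiv:2301.06589 — 5 statements merged into one kernel-verified Lean document; each statement's English description precedes it below -/
import Mathlib

section
/- Let X be a metric space with at most N points (N ∈ ℕ, N ≥ 2), let f : X → X be a bijection, and let ε > 0. If there exist x, y ∈ X with d(f(x), f(y)) > d(x, y) + ε, then there exist x̃, ỹ ∈ X with d(f(x̃), f(ỹ)) < d(x̃, ỹ) − ε/(M(N) − 1), where M(N) = max{ max_{l+m ≤ N} lcm(l, m), N }. -/
/-- The maximum of `lcm l m` over pairs of positive integers with `l + m ≤ N`. -/
def lcmMax (N : ℕ) : ℕ :=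
  ((Finset.Icc 1 N ×ˢ Finset.Icc 1 N).filter (fun p => p.1 + p.2 ≤ N)).sup
    (fun p => Nat.lcm p.1 p.2)

/-- `M(N) = max { max_{l+m ≤ N} lcm(l,m), N }`. -/
def Mval (N : ℕ) : ℕ := max (lcmMax N) N

theorem uniform_plasticity_finite_sharp_bound
    (X : Type*) [MetricSpace X] [Fintype X] (N : ℕ) (hN : 2 ≤ N)
    (hcard : Fintype.card X ≤ N)
    (f : X → X) (hbij : Function.Bijective f)
    (ε : ℝ) (hε : 0 < ε)
    (hex : ∃ x y : X, dist (f x) (f y) > dist x y + ε) :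
    ∃ x y : X, dist (f x) (f y) < dist x y - ε / ((Mval N : ℝ) - 1) := by
  classical
  obtain ⟨x, y, hxy⟩ := hex
  set e : Equiv.Perm X := Equiv.ofBijective f hbij with he
  have hfe : ∀ n : ℕ, ∀ z : X, f^[n] z = (e ^ n) z := by
    intro n z
    rw [Equiv.Perm.coe_pow]
    rfl
  have hper : ∀ z : X, z ∈ Function.periodicPts f := by
    intro z
    refine ⟨orderOf e, orderOf_pos e, ?_⟩
    show f^[orderOf e] z = z
    rw [hfe, pow_orderOf_eq_one]
    rfl
  set l := Function.minimalPeriod f x with hl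
  set m := Function.minimalPeriod f y with hm
  have hlpos : 0 < l := Function.minimalPeriod_pos_of_mem_periodicPts (hper x)
  have hmpos : 0 < m := Function.minimalPeriod_pos_of_mem_periodicPts (hper y)
  set k := Nat.lcm l m with hk
  have hkpos : 0 < k := Nat.lcm_pos hlpos hmpos
  have hkx : f^[k] x = x :=
    (Function.isPeriodicPt_iff_minimalPeriod_dvd.mpr (Nat.dvd_lcm_left l m))
  have hky : f^[k] y = y :=
    (Function.isPeriodicPt_iff_minimalPeriod_dvd.mpr (Nat.dvd_lcm_right l m))
  -- orbit finsets
  set S : Finset X := (Finset.range l).image (fun i => f^[i] x) with hS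
  set T : Finset X := (Finset.range m).image (fun i => f^[i] y) with hT
  have hScard : S.card = l := by
    rw [hS, Finset.card_image_of_injOn, Finset.card_range]
    intro a ha b hb hab
    exact Function.iterate_injOn_Iio_minimalPeriod
      (by simpa using ha) (by simpa using hb) hab
  have hTcard : T.card = m := by
    rw [hT, Finset.card_image_of_injOn, Finset.card_range]
    intro a ha b hb hab
    exact Function.iterate_injOn_Iio_minimalPeriod
      (by simpa using ha) (by simpa using hb) hab
  have hlN : l ≤ N := by
    calc l = S.card := hScard.symm
    _ ≤ Fintype.card X := Finset.card_le_univ S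
    _ ≤ N := hcard
  have hmN : m ≤ N := by
    calc m = T.card := hTcard.symm
    _ ≤ Fintype.card X := Finset.card_le_univ T
    _ ≤ N := hcard
  -- k ≤ Mval N
  have hkM : k ≤ Mval N := by
    by_cases hdisj : Disjoint S T
    · -- different orbits : l + m ≤ N
      have hlm : l + m ≤ N := by
        calc l + m = S.card + T.card := by rw [hScard, hTcard]
        _ = (S ∪ T).card := (Finset.card_union_of_disjoint hdisj).symm
        _ ≤ Fintype.card X := Finset.card_le_univ _
        _ ≤ N := hcard
      have hmem : (l, m) ∈
          ((Finset.Icc 1 N ×ˢ Finset.Icc 1 N).filter (fun p => p.1 + p.2 ≤ N)) := by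
        simp only [Finset.mem_filter, Finset.mem_product, Finset.mem_Icc]
        exact ⟨⟨⟨hlpos, hlN⟩, ⟨hmpos, hmN⟩⟩, hlm⟩
      have := Finset.le_sup (f := fun p : ℕ × ℕ => Nat.lcm p.1 p.2) hmem
      exact le_trans this (le_max_left _ _)
    · -- same orbit : l = m
      rw [Finset.disjoint_left] at hdisj
      push_neg at hdisj
      obtain ⟨a, haS, haT⟩ := hdisj
      obtain ⟨i, hi, hia⟩ := Finset.mem_image.mp haS
      obtain ⟨j, hj, hja⟩ := Finset.mem_image.mp haT
      have h1 : Function.minimalPeriod f (f^[i] x) = l :=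
        Function.minimalPeriod_apply_iterate (hper x) i
      have h2 : Function.minimalPeriod f (f^[j] y) = m :=
        Function.minimalPeriod_apply_iterate (hper y) j
      have hlm : l = m := by rw [← h1, ← h2, hia, hja]
      have : k = l := by rw [hk, hlm, Nat.lcm_self]
      rw [this]
      exact le_trans hlN (le_max_right _ _)
  -- k ≥ 2
  have hk2 : 2 ≤ k := by
    by_contra h
    push_neg at h
    have hk1 : k = 1 := by omega
    have hx1 : f x = x := by rw [hk1] at hkx; simpa using hkx
    have hy1 : f y = y := by rw [hk1] at hky; simpa using hky
    rw [hx1, hy1] at hxy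
    linarith
  have hMN : 2 ≤ Mval N := le_trans hN (le_max_right _ _)
  -- real casts
  have hkr : (1 : ℝ) ≤ (k : ℝ) - 1 := by
    have : (2 : ℝ) ≤ (k : ℝ) := by exact_mod_cast hk2
    linarith
  have hMr : (1 : ℝ) ≤ (Mval N : ℝ) - 1 := by
    have : (2 : ℝ) ≤ (Mval N : ℝ) := by exact_mod_cast hMN
    linarith
  have hkMr : (k : ℝ) - 1 ≤ (Mval N : ℝ) - 1 := by
    have : (k : ℝ) ≤ (Mval N : ℝ) := by exact_mod_cast hkM
    linarith
  set D : ℕ → ℝ := fun i => dist (f^[i] x) (f^[i] y) with hD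
  have htel : ∑ i ∈ Finset.range k, (D (i + 1) - D i) = 0 := by
    rw [Finset.sum_range_sub]
    have : D k = D 0 := by simp [hD, hkx, hky]
    rw [this, sub_self]
  have hD1 : D 1 - D 0 > ε := by
    simp only [hD, Function.iterate_one, Function.iterate_zero, id]
    linarith
  have hsplit : ∑ i ∈ Finset.Ico 1 k, (D (i + 1) - D i) < -ε := by
    have h01 : ∑ i ∈ Finset.range k, (D (i + 1) - D i)
        = (D 1 - D 0) + ∑ i ∈ Finset.Ico 1 k, (D (i + 1) - D i) := by
      rw [Finset.range_eq_Ico, Finset.sum_eq_sum_Ico_succ_bot (by omega : 0 < k)]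
    rw [h01] at htel
    linarith
  set c : ℝ := ε / ((k : ℝ) - 1) with hc
  have hcpos : 0 < c := div_pos hε (by linarith)
  have hconst : ∑ _i ∈ Finset.Ico 1 k, (-c) = -ε := by
    rw [Finset.sum_const, Nat.card_Ico, nsmul_eq_mul]
    have hcast : ((k - 1 : ℕ) : ℝ) = (k : ℝ) - 1 := by
      have : 1 ≤ k := by omega
      push_cast [this]; ring
    rw [hcast, hc]
    field_simp
  have hexlt : ∃ i ∈ Finset.Ico 1 k, D (i + 1) - D i < -c := by
    by_contra h
    push_neg at h
    have : ∑ i ∈ Finset.Ico 1 k, (-c) ≤ ∑ i ∈ Finset.Ico 1 k, (D (i + 1) - D i) :=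
      Finset.sum_le_sum fun i hi => h i hi
    rw [hconst] at this
    linarith
  obtain ⟨i, _, hilt⟩ := hexlt
  refine ⟨f^[i] x, f^[i] y, ?_⟩
  have hfx : f (f^[i] x) = f^[i + 1] x := (Function.iterate_succ_apply' f i x).symm
  have hfy : f (f^[i] y) = f^[i + 1] y := (Function.iterate_succ_apply' f i y).symm
  rw [hfx, hfy]
  have hcc : ε / ((Mval N : ℝ) - 1) ≤ c := by
    rw [hc]
    exact div_le_div_of_nonneg_left hε.le (by linarith) hkMr
  have : D (i + 1) < D i - c := by linarith
  calc dist (f^[i + 1] x) (f^[i + 1] y) = D (i + 1) := rfl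
  _ < D i - c := this
  _ ≤ D i - ε / ((Mval N : ℝ) - 1) := by linarith
end

section
/- Let X, Y be totally bounded metric spaces, ε > 0, with s(X, ε) > s(Y, ε) − ε, and let f : X → Y be noncontractive. If A ⊂ X is an ε-separated set with at least 2 elements and σ(A) > s(X, ε) − ε, then f(A) is a maximal ε-separated set in Y. -/
/-- Sum of pairwise distances of a finite set. -/
noncomputable def sigmaSum {Z : Type*} [MetricSpace Z] (A : Finset Z) : ℝ :=
  ∑ a ∈ A, ∑ b ∈ A, dist a b

/-- A finite set is `t`-separated if distinct elements are at distance `≥ t`. -/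
def IsSeparated' {Z : Type*} [MetricSpace Z] (t : ℝ) (A : Set Z) : Prop :=
  ∀ a ∈ A, ∀ b ∈ A, a ≠ b → t ≤ dist a b

/-- `s(Z, t)`: supremum of `σ(B)` over nonempty finite `t`-separated subsets of `Z`. -/
noncomputable def sSep (Z : Type*) [MetricSpace Z] (t : ℝ) : ℝ :=
  sSup { s : ℝ | ∃ B : Finset Z, B.Nonempty ∧ IsSeparated' t (B : Set Z) ∧ s = sigmaSum B }

lemma sep_card_bdd {Z : Type*} [MetricSpace Z] (htb : TotallyBounded (Set.univ : Set Z))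
    {t : ℝ} (ht : 0 < t) : ∃ N : ℕ, ∀ B : Finset Z, IsSeparated' t (B : Set Z) → B.card ≤ N := by
  obtain ⟨T, hTfin, hTcov⟩ := (Metric.totallyBounded_iff.mp htb) (t/2) (by linarith)
  refine ⟨hTfin.toFinset.card, fun B hB => ?_⟩
  have hmem : ∀ b : Z, ∃ y ∈ T, dist b y < t/2 := by
    intro b
    have := hTcov (Set.mem_univ b)
    simpa [Metric.mem_ball] using this
  choose c hcT hcd using hmem
  apply Finset.card_le_card_of_injOn c
  · intro b _; simpa using hcT b
  · intro a ha b hb hab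
    by_contra hne
    have h1 : dist a b ≤ dist a (c a) + dist (c b) b := by
      rw [hab]; exact dist_triangle a (c b) b
    have h2 : t ≤ dist a b := hB a (by simpa using ha) b (by simpa using hb) hne
    have := hcd a
    have := hcd b
    rw [dist_comm (c b) b] at h1
    linarith

lemma sSep_bddAbove {Z : Type*} [MetricSpace Z] (htb : TotallyBounded (Set.univ : Set Z))
    {t : ℝ} (ht : 0 < t) :
    BddAbove { s : ℝ | ∃ B : Finset Z, B.Nonempty ∧ IsSeparated' t (B : Set Z) ∧ s = sigmaSum B } := by
  obtain ⟨N, hN⟩ := sep_card_bdd htb ht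
  obtain ⟨C, hC⟩ := Metric.isBounded_iff.mp htb.isBounded
  set M := max C 0 with hM
  have hM0 : 0 ≤ M := le_max_right _ _
  refine ⟨(N : ℝ) * N * M, ?_⟩
  rintro s ⟨B, hBne, hBsep, rfl⟩
  have hcard : B.card ≤ N := hN B hBsep
  have hd : ∀ a b : Z, dist a b ≤ M :=
    fun a b => le_trans (hC (Set.mem_univ a) (Set.mem_univ b)) (le_max_left _ _)
  calc sigmaSum B ≤ ∑ a ∈ B, ∑ b ∈ B, M := by
        apply Finset.sum_le_sum; intro a _
        apply Finset.sum_le_sum; intro b _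
        exact hd a b
    _ = (B.card : ℝ) * B.card * M := by
        simp [Finset.sum_const, mul_assoc]
    _ ≤ (N : ℝ) * N * M := by
        have : (B.card : ℝ) ≤ N := Nat.cast_le.mpr hcard
        have h0 : (0:ℝ) ≤ B.card := Nat.cast_nonneg _
        exact mul_le_mul_of_nonneg_right (mul_le_mul this this h0 (Nat.cast_nonneg _)) hM0

theorem image_maximal_separated
    (X Y : Type*) [MetricSpace X] [MetricSpace Y]
    (hXtb : TotallyBounded (Set.univ : Set X))
    (hYtb : TotallyBounded (Set.univ : Set Y))
    (ε : ℝ) (hε : 0 < ε) (hs : sSep X ε > sSep Y ε - ε)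
    (f : X → Y) (hnc : ∀ x y : X, dist x y ≤ dist (f x) (f y))
    (A : Finset X) (hA2 : 2 ≤ A.card)
    (hAsep : IsSeparated' ε (A : Set X))
    (hAσ : sigmaSum A > sSep X ε - ε) :
    IsSeparated' ε (f '' (A : Set X)) ∧
      ∀ C : Set Y, f '' (A : Set X) ⊆ C → IsSeparated' ε C → C = f '' (A : Set X) := by
  classical
  -- f is injective on A
  have hinj : ∀ a ∈ A, ∀ b ∈ A, f a = f b → a = b := by
    intro a ha b hb hfab
    by_contra hne
    have h1 : ε ≤ dist a b := hAsep a ha b hb hne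
    have h2 : dist a b ≤ dist (f a) (f b) := hnc a b
    rw [hfab, dist_self] at h2
    linarith
  have hfsep : IsSeparated' ε (f '' (A : Set X)) := by
    rintro _ ⟨a, ha, rfl⟩ _ ⟨b, hb, rfl⟩ hne
    have hab : a ≠ b := fun h => hne (by rw [h])
    exact le_trans (hAsep a ha b hb hab) (hnc a b)
  refine ⟨hfsep, fun C hsub hCsep => ?_⟩
  by_contra hne
  -- get a point y ∈ C \ f(A)
  have : ∃ y ∈ C, y ∉ f '' (A : Set X) := by
    by_contra h
    push_neg at h
    exact hne (Set.Subset.antisymm h hsub)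
  obtain ⟨y, hyC, hyA⟩ := this
  set D : Finset Y := A.image f with hD
  have hDcoe : (D : Set Y) = f '' (A : Set X) := by simp [hD]
  have hyD : y ∉ D := by rw [← Finset.mem_coe, hDcoe] at *; exact hyA
  have hDcard : D.card = A.card := Finset.card_image_of_injOn hinj
  -- σ(D) ≥ σ(A)
  have hσD : sigmaSum A ≤ sigmaSum D := by
    unfold sigmaSum
    rw [hD, Finset.sum_image hinj]
    apply Finset.sum_le_sum; intro a _
    rw [Finset.sum_image hinj]
    apply Finset.sum_le_sum; intro b _
    exact hnc a b
  -- E = insert y D is separated and a subset of C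
  set E : Finset Y := insert y D with hE
  have hEsub : (E : Set Y) ⊆ C := by
    rw [hE]
    intro z hz
    simp only [Finset.coe_insert, Set.mem_insert_iff] at hz
    rcases hz with rfl | hz
    · exact hyC
    · exact hsub (hDcoe ▸ hz)
  have hEsep : IsSeparated' ε (E : Set Y) := fun a ha b hb hab =>
    hCsep a (hEsub ha) b (hEsub hb) hab
  -- σ(E) ≥ σ(D) + 2 |D| ε
  have hydist : ∀ b ∈ D, ε ≤ dist y b := by
    intro b hb
    have hbD : b ∈ C := hsub (hDcoe ▸ Finset.mem_coe.mpr hb)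
    have : y ≠ b := fun h => hyD (h ▸ hb)
    exact hCsep y hyC b hbD this
  have hEσ : sigmaSum D + 2 * D.card * ε ≤ sigmaSum E := by
    have hEeq : sigmaSum E = sigmaSum D + (∑ b ∈ D, dist y b) + (∑ a ∈ D, dist a y) := by
      unfold sigmaSum
      rw [hE, Finset.sum_insert hyD, Finset.sum_insert hyD]
      have : ∀ a ∈ D, ∑ b ∈ insert y D, dist a b = dist a y + ∑ b ∈ D, dist a b :=
        fun a _ => Finset.sum_insert hyD
      rw [Finset.sum_congr rfl this, Finset.sum_add_distrib, dist_self]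
      ring
    have h1 : (D.card : ℝ) * ε ≤ ∑ b ∈ D, dist y b := by
      calc (D.card : ℝ) * ε = ∑ _b ∈ D, ε := by rw [Finset.sum_const, nsmul_eq_mul]
        _ ≤ ∑ b ∈ D, dist y b := Finset.sum_le_sum hydist
    have h2 : (D.card : ℝ) * ε ≤ ∑ a ∈ D, dist a y := by
      calc (D.card : ℝ) * ε = ∑ _a ∈ D, ε := by rw [Finset.sum_const, nsmul_eq_mul]
        _ ≤ ∑ a ∈ D, dist a y := Finset.sum_le_sum (fun a ha => dist_comm y a ▸ hydist a ha)
    rw [hEeq]; linarith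
  -- σ(E) ≤ sSep Y ε
  have hEle : sigmaSum E ≤ sSep Y ε := by
    apply le_csSup (sSep_bddAbove hYtb hε)
    exact ⟨E, Finset.insert_nonempty _ _, hEsep, rfl⟩
  have hcard4 : (4:ℝ) * ε ≤ 2 * D.card * ε := by
    have : (2:ℝ) ≤ D.card := by
      rw [hDcard]; exact_mod_cast hA2
    nlinarith
  -- contradiction
  have : sSep Y ε + 2 * ε < sSep Y ε := by
    calc sSep Y ε + 2 * ε < sSep X ε + 3 * ε := by linarith
      _ < sigmaSum A + 4 * ε := by linarith
      _ ≤ sigmaSum D + 2 * D.card * ε := by linarith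
      _ ≤ sigmaSum E := hEσ
      _ ≤ sSep Y ε := hEle
  linarith
end

section
/- Let X, Y be totally bounded metric spaces with s(X, δ) ≥ s(Y, δ) for every δ > 0, where s(Z, δ) is the supremum of the sum of pairwise distances over nonempty finite δ-separated subsets of Z. Then (X, Y) is a strongly plastic pair: every noncontractive map f : X → Y is an isometric embedding. -/
/-!
Suppose `f` stretches some pair, `d(f a, f b) = d(a, b) + 11 δ` with `δ > 0`. Take a `δ`-separated
set `B ⊆ X` whose distance sum is within `δ` of `s(X, δ)`. Adding any point at distance `≥ δ` from
`B` would raise the sum by `≥ 2 δ`, so `B` is a `δ`-net. Since `f(B)` is `δ`-separated and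
`σ(f(B)) ≤ s(Y, δ) ≤ s(X, δ)`, the total stretching of `f` on `B` is at most `δ`. Comparing `a`, `b`
with nearby net points, one of them, `u`, is sent at distance `≥ δ` from all of `f(B)`; then
`f(B) ∪ {f u}` is a `δ`-separated subset of `Y` with sum `> s(X, δ) ≥ s(Y, δ)`, a contradiction.
-/

open Finset

section SeparatedSums

variable {Z : Type*} [MetricSpace Z] {δ : ℝ}

/-- `sSep Z δ` is definitionally `sSup (sepSums Z δ)`. -/
def sepSums (Z : Type*) [MetricSpace Z] (δ : ℝ) : Set ℝ :=
  { s | ∃ B : Finset Z, B.Nonempty ∧ IsSeparated' δ (B : Set Z) ∧ s = sigmaSum B }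

theorem sigmaSum_insert [DecidableEq Z] {A : Finset Z} {x : Z} (hx : x ∉ A) :
    sigmaSum (insert x A) = sigmaSum A + 2 * ∑ y ∈ A, dist x y := by
  unfold sigmaSum
  simp only [sum_insert hx, dist_self, zero_add, sum_add_distrib]
  rw [sum_congr rfl fun a _ => dist_comm a x]
  ring

theorem sigmaSum_image [DecidableEq Z] {W : Type*} {f : W → Z} {B : Finset W}
    (hf : Set.InjOn f B) : sigmaSum (B.image f) = ∑ z ∈ B, ∑ w ∈ B, dist (f z) (f w) := by
  simp only [sigmaSum, sum_image hf]

theorem IsSeparated'.insert {A : Set Z} (hA : IsSeparated' δ A) {x : Z}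
    (hx : ∀ a ∈ A, δ ≤ dist x a) : IsSeparated' δ (insert x A) := by
  rintro u (rfl | hu) v (rfl | hv) huv
  · exact absurd rfl huv
  · exact hx v hv
  · exact dist_comm u v ▸ hx u hu
  · exact hA u hu v hv huv

theorem exists_card_le_of_isSeparated' (htb : TotallyBounded (Set.univ : Set Z)) (hδ : 0 < δ) :
    ∃ N : ℕ, ∀ B : Finset Z, IsSeparated' δ (B : Set Z) → #B ≤ N := by
  obtain ⟨t, htf, htc⟩ := Metric.totallyBounded_iff.mp htb (δ / 2) (half_pos hδ)
  have hcenter (b : Z) : ∃ c ∈ htf.toFinset, dist b c < δ / 2 := by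
    obtain ⟨c, hct, hbc⟩ := Set.mem_iUnion₂.mp (htc (Set.mem_univ b))
    exact ⟨c, htf.mem_toFinset.mpr hct, hbc⟩
  choose g hgt hgb using hcenter
  refine ⟨#htf.toFinset, fun B hB => card_le_card_of_injOn g (fun b _ => hgt b) ?_⟩
  intro b₁ hb₁ b₂ hb₂ hg
  by_contra hne
  have := hB b₁ hb₁ b₂ hb₂ hne
  have := dist_triangle_right b₁ b₂ (g b₁)
  linarith [hgb b₁, hg ▸ hgb b₂]

theorem bddAbove_sepSums (htb : TotallyBounded (Set.univ : Set Z)) (hδ : 0 < δ) :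
    BddAbove (sepSums Z δ) := by
  obtain ⟨N, hN⟩ := exists_card_le_of_isSeparated' htb hδ
  obtain ⟨M, hM⟩ := Metric.isBounded_iff.mp htb.isBounded
  refine ⟨N * N * M, ?_⟩
  rintro s ⟨B, ⟨b, -⟩, hsep, rfl⟩
  have hM0 : 0 ≤ M := dist_nonneg.trans (hM (Set.mem_univ b) (Set.mem_univ b))
  have hcard : (#B : ℝ) ≤ N := by exact_mod_cast hN B hsep
  calc sigmaSum B ≤ ∑ _a ∈ B, ∑ _b ∈ B, M :=
        sum_le_sum fun a _ => sum_le_sum fun b _ => hM (Set.mem_univ a) (Set.mem_univ b)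
    _ = #B * #B * M := by simp only [sum_const, nsmul_eq_mul]; ring
    _ ≤ N * N * M := by gcongr

theorem sigmaSum_le_sSep (hbdd : BddAbove (sepSums Z δ)) {B : Finset Z} (hB : B.Nonempty)
    (hsep : IsSeparated' δ (B : Set Z)) : sigmaSum B ≤ sSep Z δ :=
  le_csSup hbdd ⟨B, hB, hsep, rfl⟩

theorem exists_sSep_sub_lt_sigmaSum [Nonempty Z] {η : ℝ} (hη : 0 < η) :
    ∃ B : Finset Z, B.Nonempty ∧ IsSeparated' δ (B : Set Z) ∧ sSep Z δ - η < sigmaSum B := by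
  obtain ⟨z⟩ := ‹Nonempty Z›
  have hne : (sepSums Z δ).Nonempty :=
    ⟨_, {z}, singleton_nonempty z, fun a ha b hb hab =>
      absurd ((mem_singleton.mp ha).trans (mem_singleton.mp hb).symm) hab, rfl⟩
  obtain ⟨_, ⟨B, hB, hsep, rfl⟩, hlt⟩ := exists_lt_of_lt_csSup hne (sub_lt_self (sSep Z δ) hη)
  exact ⟨B, hB, hsep, hlt⟩

theorem sigmaSum_add_two_mul_le_sSep (hbdd : BddAbove (sepSums Z δ)) (hδ : 0 < δ)
    {B : Finset Z} (hB : B.Nonempty) (hsep : IsSeparated' δ (B : Set Z)) {x : Z}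
    (hx : ∀ b ∈ B, δ ≤ dist x b) : sigmaSum B + 2 * δ ≤ sSep Z δ := by
  classical
  have hxB : x ∉ B := fun hxB => by linarith [dist_self x ▸ hx x hxB]
  obtain ⟨b, hb⟩ := hB
  have hsum : δ ≤ ∑ y ∈ B, dist x y :=
    (hx b hb).trans (single_le_sum (f := fun y => dist x y) (fun _ _ => dist_nonneg) hb)
  have hins := sigmaSum_le_sSep hbdd (insert_nonempty x B)
    (by simpa only [coe_insert] using hsep.insert hx)
  rw [sigmaSum_insert hxB] at hins
  linarith

theorem exists_dist_lt_of_sSep_lt (hbdd : BddAbove (sepSums Z δ)) (hδ : 0 < δ)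
    {B : Finset Z} (hB : B.Nonempty) (hsep : IsSeparated' δ (B : Set Z))
    (hopt : sSep Z δ < sigmaSum B + 2 * δ) (x : Z) : ∃ z ∈ B, dist x z < δ := by
  by_contra! hfar
  exact (sigmaSum_add_two_mul_le_sSep hbdd hδ hB hsep hfar).not_gt hopt

end SeparatedSums

section Noncontractive

variable {X Y : Type*} [MetricSpace X] [MetricSpace Y] {f : X → Y} {δ : ℝ}

theorem injective_of_noncontractive (hf : ∀ x y, dist x y ≤ dist (f x) (f y)) :
    Function.Injective f := fun x y hxy =>
  dist_le_zero.mp ((hf x y).trans_eq (by rw [hxy, dist_self]))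

theorem IsSeparated'.image_of_noncontractive (hf : ∀ x y, dist x y ≤ dist (f x) (f y))
    {A : Set X} (hA : IsSeparated' δ A) : IsSeparated' δ (f '' A) := by
  rintro _ ⟨z, hz, rfl⟩ _ ⟨w, hw, rfl⟩ hzw
  exact (hA z hz w hw fun h => hzw (h ▸ rfl)).trans (hf z w)

theorem sigmaSum_le_sigmaSum_image [DecidableEq Y] (hf : ∀ x y, dist x y ≤ dist (f x) (f y))
    (B : Finset X) : sigmaSum B ≤ sigmaSum (B.image f) := by
  rw [sigmaSum_image (injective_of_noncontractive hf).injOn]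
  exact sum_le_sum fun z _ => sum_le_sum fun w _ => hf z w

theorem dist_apply_le_add_sigmaSum_image_sub [DecidableEq Y]
    (hf : ∀ x y, dist x y ≤ dist (f x) (f y)) {B : Finset X} {z w : X} (hz : z ∈ B) (hw : w ∈ B) :
    dist (f z) (f w) ≤ dist z w + (sigmaSum (B.image f) - sigmaSum B) := by
  have hstretch : dist (f z) (f w) - dist z w ≤
      ∑ z' ∈ B, ∑ w' ∈ B, (dist (f z') (f w') - dist z' w') :=
    calc dist (f z) (f w) - dist z w ≤ ∑ w' ∈ B, (dist (f z) (f w') - dist z w') :=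
          single_le_sum (fun i _ => sub_nonneg.mpr (hf z i)) hw
      _ ≤ _ := single_le_sum (f := fun z' => ∑ w' ∈ B, (dist (f z') (f w') - dist z' w'))
          (fun i _ => sum_nonneg fun j _ => sub_nonneg.mpr (hf i j)) hz
  simp only [sum_sub_distrib] at hstretch
  rw [sigmaSum_image (injective_of_noncontractive hf).injOn, sigmaSum]
  linarith

theorem exists_stretched_pair_near {S : Set X} (hnet : ∀ x, ∃ z ∈ S, dist x z < δ)
    (halmost : ∀ z ∈ S, ∀ w ∈ S, dist (f z) (f w) ≤ dist z w + δ) {a b : X}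
    (hab : dist a b + 11 * δ ≤ dist (f a) (f b)) :
    ∃ u, ∃ v ∈ S, dist u v < δ ∧ 4 * δ ≤ dist (f u) (f v) := by
  obtain ⟨p, hp, hap⟩ := hnet a
  obtain ⟨q, hq, hbq⟩ := hnet b
  have hfab := dist_triangle4 (f a) (f p) (f q) (f b)
  have hpq := dist_triangle4 p a b q
  have := halmost p hp q hq
  rw [dist_comm p a, dist_comm (f q) (f b)] at *
  rcases le_total (dist (f a) (f p)) (dist (f b) (f q)) with hle | hle
  · exact ⟨b, q, hq, hbq, by linarith⟩
  · exact ⟨a, p, hp, hap, by linarith⟩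

theorem le_dist_apply_of_stretched (hf : ∀ x y, dist x y ≤ dist (f x) (f y)) {S : Set X}
    (halmost : ∀ z ∈ S, ∀ w ∈ S, dist (f z) (f w) ≤ dist z w + δ) {u v : X} (hv : v ∈ S)
    (huv : dist u v < δ) (hstretch : 4 * δ ≤ dist (f u) (f v)) :
    ∀ z ∈ S, δ ≤ dist (f u) (f z) := by
  intro z hz
  rcases le_or_gt δ (dist u z) with hfar | hnear
  · exact hfar.trans (hf u z)
  · have := dist_triangle (f u) (f z) (f v)
    have := halmost z hz v hv
    have := dist_triangle_left z v u
    linarith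

end Noncontractive

theorem strongly_plastic_pair_of_sSep_le
    (X Y : Type*) [MetricSpace X] [MetricSpace Y]
    (hXtb : TotallyBounded (Set.univ : Set X))
    (hYtb : TotallyBounded (Set.univ : Set Y))
    (h : ∀ δ : ℝ, 0 < δ → sSep Y δ ≤ sSep X δ)
    (f : X → Y) (hnc : ∀ x y : X, dist x y ≤ dist (f x) (f y)) :
    ∀ x y : X, dist (f x) (f y) = dist x y := by
  classical
  intro a b
  refine le_antisymm ?_ (hnc a b)
  by_contra! hlt
  obtain ⟨δ, hδ, hab⟩ : ∃ δ > 0, dist a b + 11 * δ ≤ dist (f a) (f b) :=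
    ⟨(dist (f a) (f b) - dist a b) / 11, by linarith, by linarith⟩
  have hXY := h δ hδ
  have : Nonempty X := ⟨a⟩
  obtain ⟨B, hB, hBsep, hBopt⟩ := exists_sSep_sub_lt_sigmaSum (Z := X) (δ := δ) hδ
  have hnet := exists_dist_lt_of_sSep_lt (bddAbove_sepSums hXtb hδ) hδ hB hBsep (by linarith)
  have hfBsep : IsSeparated' δ (B.image f : Set Y) := by
    simpa only [coe_image] using hBsep.image_of_noncontractive hnc
  have hfB := sigmaSum_le_sSep (bddAbove_sepSums hYtb hδ) (hB.image f) hfBsep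
  have halmost (z) (hz : z ∈ B) (w) (hw : w ∈ B) : dist (f z) (f w) ≤ dist z w + δ := by
    linarith [dist_apply_le_add_sigmaSum_image_sub hnc (B := B) hz hw]
  obtain ⟨u, v, hv, huv, hstretch⟩ :=
    exists_stretched_pair_near (S := B) hnet halmost hab
  have hfar : ∀ y ∈ B.image f, δ ≤ dist (f u) y := by
    simpa only [mem_coe, mem_image, forall_exists_index, and_imp, forall_apply_eq_imp_iff₂] using
      le_dist_apply_of_stretched hnc halmost hv huv hstretch
  have := sigmaSum_add_two_mul_le_sSep (bddAbove_sepSums hYtb hδ) hδ (hB.image f) hfBsep hfar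
  linarith [sigmaSum_le_sigmaSum_image hnc B]
end

section
/- Let X, Y be totally bounded metric spaces, let ε > 0, and suppose there exist δ < min{ ε / (N(N−1) − 6), ε / (9(N+1)) } with δ > 0, where N = N(X, ε/9) is the maximal cardinality of an (ε/9)-separated subset of X, and ν < ε/18, such that s(X, ε/9) ≥ s(Y, ε/9 − δ) − ν > 0. Then for every map f : X → Y, if there are x, y ∈ X with d(f(x), f(y)) ≥ d(x, y) + ε, then there are x̃, ỹ ∈ X with d(f(x̃), f(ỹ)) ≤ d(x̃, ỹ) − δ. -/
set_option maxHeartbeats 1000000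


/-- `N(Z, t)`: maximal cardinality of a `t`-separated subset of `Z`. -/
noncomputable def sepNum (Z : Type*) [MetricSpace Z] (t : ℝ) : ℕ :=
  sSup { n : ℕ | ∃ B : Finset Z, IsSeparated' t (B : Set Z) ∧ B.card = n }

section Aux

variable {Z : Type*} [MetricSpace Z]

lemma sigmaSum_mono {A B : Finset Z} (h : A ⊆ B) : sigmaSum A ≤ sigmaSum B := by
  unfold sigmaSum
  calc ∑ a ∈ A, ∑ b ∈ A, dist a b
      ≤ ∑ a ∈ A, ∑ b ∈ B, dist a b := by
        refine Finset.sum_le_sum fun a _ => ?_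
        exact Finset.sum_le_sum_of_subset_of_nonneg h (fun _ _ _ => dist_nonneg)
    _ ≤ ∑ a ∈ B, ∑ b ∈ B, dist a b := by
        refine Finset.sum_le_sum_of_subset_of_nonneg h (fun _ _ _ => ?_)
        exact Finset.sum_nonneg fun _ _ => dist_nonneg

/-- In a totally bounded space, `t`-separated finite sets have bounded cardinality. -/
lemma card_le_of_separated (htb : TotallyBounded (Set.univ : Set Z)) {t : ℝ} (ht : 0 < t) :
    ∃ K : ℕ, ∀ B : Finset Z, IsSeparated' t (B : Set Z) → B.card ≤ K := by
  obtain ⟨F, hFfin, hFcov⟩ := Metric.totallyBounded_iff.mp htb (t / 2) (by linarith)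
  refine ⟨hFfin.toFinset.card, fun B hB => ?_⟩
  have hc : ∀ b : Z, ∃ c ∈ F, dist b c < t / 2 := by
    intro b
    have : b ∈ ⋃ y ∈ F, Metric.ball y (t / 2) := hFcov (Set.mem_univ b)
    simpa [Metric.mem_ball, dist_comm] using this
  choose g hgF hgd using hc
  refine Finset.card_le_card_of_injOn g (fun b _ => hFfin.mem_toFinset.mpr (hgF b)) ?_
  intro a ha b hb hab
  by_contra hne
  have h1 : t ≤ dist a b := hB a ha b hb hne
  have h2 : dist a b ≤ dist a (g a) + dist b (g b) := by
    have := dist_triangle a (g a) b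
    have h3 : dist (g a) b = dist b (g b) := by rw [hab, dist_comm]
    linarith
  have := hgd a
  have := hgd b
  linarith

/-- Every `t`-separated finite set has cardinality at most `sepNum`. -/
lemma card_le_sepNum (htb : TotallyBounded (Set.univ : Set Z)) {t : ℝ} (ht : 0 < t)
    {B : Finset Z} (hB : IsSeparated' t (B : Set Z)) : B.card ≤ sepNum Z t := by
  obtain ⟨K, hK⟩ := card_le_of_separated htb ht
  exact le_csSup ⟨K, fun n ⟨B', hB', hcard⟩ => hcard ▸ hK B' hB'⟩ ⟨B, hB, rfl⟩

lemma bddAbove_sigma_set (htb : TotallyBounded (Set.univ : Set Z)) {t : ℝ} (ht : 0 < t) :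
    BddAbove { s : ℝ | ∃ B : Finset Z, B.Nonempty ∧ IsSeparated' t (B : Set Z) ∧ s = sigmaSum B } := by
  obtain ⟨K, hK⟩ := card_le_of_separated htb ht
  obtain ⟨C, hC⟩ := Metric.isBounded_iff.mp htb.isBounded
  refine ⟨(K : ℝ) * K * max C 0, ?_⟩
  rintro s ⟨B, -, hBsep, rfl⟩
  have hcard : B.card ≤ K := hK B hBsep
  have h1 : sigmaSum B ≤ (B.card : ℝ) * B.card * max C 0 := by
    unfold sigmaSum
    calc ∑ a ∈ B, ∑ b ∈ B, dist a b
        ≤ ∑ _a ∈ B, ∑ _b ∈ B, max C 0 := by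
          refine Finset.sum_le_sum fun a _ => Finset.sum_le_sum fun b _ => ?_
          exact le_max_of_le_left (hC (Set.mem_univ a) (Set.mem_univ b))
      _ = (B.card : ℝ) * B.card * max C 0 := by
          simp [Finset.sum_const, nsmul_eq_mul]; ring
  have h2 : (B.card : ℝ) * B.card * max C 0 ≤ (K : ℝ) * K * max C 0 := by
    have hc : (B.card : ℝ) ≤ K := Nat.cast_le.mpr hcard
    have h0 : (0:ℝ) ≤ B.card := Nat.cast_nonneg _
    have hm : (0:ℝ) ≤ max C 0 := le_max_right C 0
    have hKnn : (0:ℝ) ≤ (K:ℝ) := le_trans h0 hc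
    exact mul_le_mul_of_nonneg_right (mul_le_mul hc hc h0 hKnn) hm
  linarith

lemma le_sSep (htb : TotallyBounded (Set.univ : Set Z)) {t : ℝ} (ht : 0 < t)
    {B : Finset Z} (hne : B.Nonempty) (hB : IsSeparated' t (B : Set Z)) :
    sigmaSum B ≤ sSep Z t :=
  le_csSup (bddAbove_sigma_set htb ht) ⟨B, hne, hB, rfl⟩

end Aux

/-- Key estimate: if `f` contracts no pair by more than `δ` and expands the pair `(u,v)` by at
least `g`, then the image sum of pairwise distances is controlled from below. -/
lemma key_sum_bound {X Y : Type*} [MetricSpace X] [MetricSpace Y] (f : X → Y) (δ : ℝ)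
    (hH : ∀ a b : X, dist a b - δ < dist (f a) (f b))
    (S : Finset X) (u v : X) (hu : u ∈ S) (hv : v ∈ S) (huv : u ≠ v)
    (g : ℝ) (hg : dist u v + g ≤ dist (f u) (f v)) :
    sigmaSum S + 2 * (g + δ) - δ * ((S.card : ℝ) * ((S.card : ℝ) - 1))
      ≤ ∑ a ∈ S, ∑ b ∈ S, dist (f a) (f b) := by
  classical
  set P := S ×ˢ S with hP
  have hsum : ∑ a ∈ S, ∑ b ∈ S, dist (f a) (f b) = ∑ p ∈ P, dist (f p.1) (f p.2) := by
    rw [Finset.sum_product]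
  have hsig : sigmaSum S = ∑ p ∈ P, dist p.1 p.2 := by
    unfold sigmaSum; rw [Finset.sum_product]
  set E : X × X → ℝ := fun p => dist p.1 p.2 + (if p.1 = p.2 then 0 else -δ)
    + (if p = (u, v) then g + δ else 0) + (if p = (v, u) then g + δ else 0) with hE
  have hEle : ∀ p ∈ P, E p ≤ dist (f p.1) (f p.2) := by
    rintro ⟨a, b⟩ -
    simp only [hE]
    by_cases hab : a = b
    · have n1 : (a, b) ≠ (u, v) := fun h =>
        huv ((Prod.mk.inj h).1.symm.trans (hab.trans (Prod.mk.inj h).2))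
      have n2 : (a, b) ≠ (v, u) := fun h =>
        huv ((Prod.mk.inj h).2.symm.trans (hab.symm.trans (Prod.mk.inj h).1))
      rw [if_pos hab, if_neg n1, if_neg n2]
      subst hab
      simp
    · rw [if_neg hab]
      by_cases h1 : (a, b) = (u, v)
      · have hau : a = u := (Prod.mk.inj h1).1
        have hbv : b = v := (Prod.mk.inj h1).2
        have n2 : (a, b) ≠ (v, u) := fun h => huv (hau.symm.trans (Prod.mk.inj h).1)
        rw [if_pos h1, if_neg n2, hau, hbv]
        linarith
      · by_cases h2 : (a, b) = (v, u)
        · have hav : a = v := (Prod.mk.inj h2).1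
          have hbu : b = u := (Prod.mk.inj h2).2
          rw [if_neg h1, if_pos h2, hav, hbu, dist_comm v u, dist_comm (f v) (f u)]
          linarith
        · rw [if_neg h1, if_neg h2]
          have := hH a b
          linarith
  have hmain : ∑ p ∈ P, E p ≤ ∑ p ∈ P, dist (f p.1) (f p.2) :=
    Finset.sum_le_sum hEle
  have hEsum : ∑ p ∈ P, E p
      = sigmaSum S + (-δ * ((S.card : ℝ) * ((S.card : ℝ) - 1))) + (g + δ) + (g + δ) := by
    simp only [hE]
    rw [Finset.sum_add_distrib, Finset.sum_add_distrib, Finset.sum_add_distrib]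
    have e1 : ∑ p ∈ P, (if p = (u, v) then g + δ else 0) = g + δ := by
      rw [Finset.sum_ite_eq' P (u, v) (fun _ => g + δ)]
      rw [if_pos (Finset.mem_product.mpr ⟨hu, hv⟩)]
    have e2 : ∑ p ∈ P, (if p = (v, u) then g + δ else 0) = g + δ := by
      rw [Finset.sum_ite_eq' P (v, u) (fun _ => g + δ)]
      rw [if_pos (Finset.mem_product.mpr ⟨hv, hu⟩)]
    have e3 : ∑ p ∈ P, (if p.1 = p.2 then (0:ℝ) else -δ)
        = -δ * ((S.card : ℝ) * ((S.card : ℝ) - 1)) := by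
      have : ∀ p : X × X, (if p.1 = p.2 then (0:ℝ) else -δ)
          = -δ + (if p.1 = p.2 then δ else 0) := by
        intro p; by_cases h : p.1 = p.2 <;> simp [h]
      rw [Finset.sum_congr rfl (fun p _ => this p), Finset.sum_add_distrib]
      have c1 : ∑ _p ∈ P, (-δ) = ((S.card : ℝ) * (S.card : ℝ)) * (-δ) := by
        rw [Finset.sum_const, hP, Finset.card_product]
        push_cast
        ring
      have c2 : ∑ p ∈ P, (if p.1 = p.2 then δ else 0) = (S.card : ℝ) * δ := by
        rw [hP, Finset.sum_product]
        have : ∀ a ∈ S, ∑ b ∈ S, (if a = b then δ else 0) = δ := by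
          intro a ha
          rw [Finset.sum_ite_eq S a (fun _ => δ), if_pos ha]
        rw [Finset.sum_congr rfl this, Finset.sum_const, nsmul_eq_mul]
      rw [c1, c2]; ring
    rw [e1, e2, e3, hsig]
  rw [hEsum] at hmain
  linarith [hsum]

theorem uniform_strong_plasticity_quantitative
    (X Y : Type*) [MetricSpace X] [MetricSpace Y]
    (hXtb : TotallyBounded (Set.univ : Set X))
    (hYtb : TotallyBounded (Set.univ : Set Y))
    (ε : ℝ) (hε : 0 < ε) (δ ν : ℝ) (hδ0 : 0 < δ)
    (hδ : δ < min (ε / ((sepNum X (ε / 9) : ℝ) * ((sepNum X (ε / 9) : ℝ) - 1) - 6))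
      (ε / (9 * ((sepNum X (ε / 9) : ℝ) + 1))))
    (hν : ν < ε / 18)
    (hs : sSep X (ε / 9) ≥ sSep Y (ε / 9 - δ) - ν)
    (hpos : sSep Y (ε / 9 - δ) - ν > 0)
    (f : X → Y)
    (hex : ∃ x y : X, dist (f x) (f y) ≥ dist x y + ε) :
    ∃ x y : X, dist (f x) (f y) ≤ dist x y - δ := by
  classical
  by_contra hcon
  push_neg at hcon
  have hH : ∀ a b : X, dist a b - δ < dist (f a) (f b) := fun a b => hcon a b
  obtain ⟨x, y, hxy⟩ := hex
  set N : ℕ := sepNum X (ε / 9) with hN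
  -- basic facts about the constants
  have hδ1 : δ < ε / ((N : ℝ) * ((N : ℝ) - 1) - 6) := (lt_min_iff.mp hδ).1
  have hδ2 : δ < ε / (9 * ((N : ℝ) + 1)) := (lt_min_iff.mp hδ).2
  have hden2 : (0:ℝ) < 9 * ((N : ℝ) + 1) := by positivity
  have hδ2' : δ * (9 * ((N : ℝ) + 1)) < ε := (lt_div_iff₀ hden2).mp hδ2
  have hden1 : (0:ℝ) < (N : ℝ) * ((N : ℝ) - 1) - 6 := by
    by_contra h
    push_neg at h
    have : ε / ((N : ℝ) * ((N : ℝ) - 1) - 6) ≤ 0 :=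
      div_nonpos_iff.mpr (Or.inl ⟨le_of_lt hε, h⟩)
    linarith
  have hδ1' : δ * ((N : ℝ) * ((N : ℝ) - 1) - 6) < ε := (lt_div_iff₀ hden1).mp hδ1
  have hN4 : (4:ℝ) ≤ (N : ℝ) := by
    by_contra h
    push_neg at h
    have hNnat : N ≤ 3 := by exact_mod_cast Nat.lt_succ_iff.mp (by exact_mod_cast h : N < 4)
    have : (N : ℝ) ≤ 3 := by exact_mod_cast hNnat
    have h0 : (0:ℝ) ≤ (N : ℝ) := Nat.cast_nonneg _
    nlinarith
  have hδt : δ < ε / 9 := by nlinarith [(Nat.cast_nonneg N : (0:ℝ) ≤ (N:ℝ))]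
  have htpos : (0:ℝ) < ε / 9 - δ := by linarith
  -- a near-maximal separated set D
  have hset_ne : { s : ℝ | ∃ B : Finset X, B.Nonempty ∧ IsSeparated' (ε/9) (B : Set X) ∧
      s = sigmaSum B }.Nonempty := by
    refine ⟨sigmaSum {x}, {x}, ⟨x, Finset.mem_singleton_self x⟩, ?_, rfl⟩
    intro a ha b hb hab
    simp only [Finset.coe_singleton, Set.mem_singleton_iff] at ha hb
    exact absurd (ha.trans hb.symm) hab
  have hlt : sSep X (ε/9) - ε/36 < sSup { s : ℝ | ∃ B : Finset X, B.Nonempty ∧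
      IsSeparated' (ε/9) (B : Set X) ∧ s = sigmaSum B } := by
    have : sSep X (ε/9) - ε/36 < sSep X (ε/9) := by
      have : (0:ℝ) < ε/36 := by linarith
      linarith
    exact this
  obtain ⟨s0, ⟨D, hDne, hDsep, rfl⟩, hDbig⟩ := exists_lt_of_lt_csSup hset_ne hlt
  have hDcard : (D.card : ℝ) ≤ N := by exact_mod_cast card_le_sepNum hXtb (by linarith) hDsep
  -- the common framework: given a suitable S, u, v, g we derive False
  have main : ∀ (S : Finset X) (u v : X), S.Nonempty → u ∈ S → v ∈ S → u ≠ v →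
      D ⊆ S →
      (∀ a ∈ S, ∀ b ∈ S, a ≠ b → ε/9 - δ ≤ dist (f a) (f b)) →
      ∀ g : ℝ, dist u v + g ≤ dist (f u) (f v) →
      ε/36 + ν < 2 * (g + δ) - δ * ((S.card : ℝ) * ((S.card : ℝ) - 1)) → False := by
    intro S u v hSne hu hv huv hDS hsep g hg hmargin
    have hinj : ∀ a ∈ S, ∀ b ∈ S, f a = f b → a = b := by
      intro a ha b hb hfab
      by_contra hne
      have := hsep a ha b hb hne
      rw [hfab] at this
      simp at this
      linarith
    have himg : sigmaSum (S.image f) = ∑ a ∈ S, ∑ b ∈ S, dist (f a) (f b) := by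
      unfold sigmaSum
      rw [Finset.sum_image hinj]
      exact Finset.sum_congr rfl fun a _ => Finset.sum_image hinj
    have himgsep : IsSeparated' (ε/9 - δ) ((S.image f : Finset Y) : Set Y) := by
      intro p hp q hq hpq
      simp only [Finset.coe_image, Set.mem_image, Finset.mem_coe] at hp hq
      obtain ⟨a, ha, rfl⟩ := hp
      obtain ⟨b, hb, rfl⟩ := hq
      exact hsep a ha b hb (fun h => hpq (h ▸ rfl))
    have himgne : (S.image f).Nonempty := hSne.image f
    have hle : sigmaSum (S.image f) ≤ sSep Y (ε/9 - δ) :=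
      le_sSep hYtb htpos himgne himgsep
    have hkey := key_sum_bound f δ hH S u v hu hv huv g hg
    have hmono : sigmaSum D ≤ sigmaSum S := sigmaSum_mono hDS
    -- chain of inequalities
    have : sigmaSum D + (2 * (g + δ) - δ * ((S.card : ℝ) * ((S.card : ℝ) - 1)))
        ≤ sSep X (ε/9) + ν := by
      calc sigmaSum D + (2 * (g + δ) - δ * ((S.card : ℝ) * ((S.card : ℝ) - 1)))
          ≤ sigmaSum S + 2 * (g + δ) - δ * ((S.card : ℝ) * ((S.card : ℝ) - 1)) := by linarith
        _ ≤ ∑ a ∈ S, ∑ b ∈ S, dist (f a) (f b) := hkey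
        _ = sigmaSum (S.image f) := himg.symm
        _ ≤ sSep Y (ε/9 - δ) := hle
        _ ≤ sSep X (ε/9) + ν := by linarith
    linarith
  -- goodness dichotomy
  by_cases hbx : ∃ b ∈ D, dist b x < ε/9 ∧ dist (f b) (f x) < ε/9 - δ
  · obtain ⟨b, hbD, hbx1, hbx2⟩ := hbx
    by_cases hby : ∃ b' ∈ D, dist b' y < ε/9 ∧ dist (f b') (f y) < ε/9 - δ
    · -- both bad: use pair (b, b') inside D
      obtain ⟨b', hb'D, hby1, hby2⟩ := hby
      have hgain : dist b b' + (ε - 4*(ε/9) + 2*δ) ≤ dist (f b) (f b') := by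
        have t1 : dist (f x) (f y) ≤ dist (f x) (f b) + dist (f b) (f b') + dist (f b') (f y) :=
          dist_triangle4 (f x) (f b) (f b') (f y)
        have t2 : dist b b' ≤ dist b x + dist x y + dist y b' := dist_triangle4 b x y b'
        have e1 : dist (f x) (f b) = dist (f b) (f x) := dist_comm _ _
        have e2 : dist y b' = dist b' y := dist_comm _ _
        linarith
      have hbb' : b ≠ b' := by
        intro h
        rw [h] at hgain
        simp at hgain
        linarith
      have hsep : ∀ a ∈ D, ∀ c ∈ D, a ≠ c → ε/9 - δ ≤ dist (f a) (f c) := by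
        intro a ha c hc hac
        have := hH a c
        have := hDsep a ha c hc hac
        linarith
      refine main D b b' hDne hbD hb'D hbb' (Finset.Subset.refl D) hsep _ hgain ?_
      have hc : (D.card : ℝ) * ((D.card : ℝ) - 1) ≤ (N : ℝ) * ((N : ℝ) - 1) := by
        have h0 : (0:ℝ) ≤ (D.card : ℝ) := Nat.cast_nonneg _
        nlinarith
      nlinarith
    · -- x bad, y good: use S = insert y D, pair (y, b)
      push_neg at hby
      have hgain : dist y b + (ε - 2*(ε/9) + δ) ≤ dist (f y) (f b) := by
        have t1 : dist (f x) (f y) ≤ dist (f x) (f b) + dist (f b) (f y) := dist_triangle _ _ _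
        have t2 : dist y b ≤ dist y x + dist x b := dist_triangle _ _ _
        have e1 : dist (f x) (f b) = dist (f b) (f x) := dist_comm _ _
        have e2 : dist y x = dist x y := dist_comm _ _
        have e3 : dist x b = dist b x := dist_comm _ _
        have e4 : dist (f b) (f y) = dist (f y) (f b) := dist_comm _ _
        linarith
      have hyb : y ≠ b := by
        intro h
        rw [h] at hgain
        simp at hgain
        linarith
      set S : Finset X := insert y D with hS
      have hyS : y ∈ S := Finset.mem_insert_self y D
      have hbS : b ∈ S := Finset.mem_insert_of_mem hbD
      have hDS : D ⊆ S := Finset.subset_insert y D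
      have hsep : ∀ a ∈ S, ∀ c ∈ S, a ≠ c → ε/9 - δ ≤ dist (f a) (f c) := by
        have haux : ∀ c ∈ D, ε/9 - δ ≤ dist (f y) (f c) := by
          intro c hc
          by_cases hd : dist c y < ε/9
          · have := hby c hc hd
            rw [dist_comm (f y) (f c)]
            linarith
          · push_neg at hd
            have := hH y c
            rw [dist_comm y c] at this
            linarith
        intro a ha c hc hac
        rcases Finset.mem_insert.mp ha with rfl | haD
        · rcases Finset.mem_insert.mp hc with rfl | hcD
          · exact absurd rfl hac
          · exact haux c hcD
        · rcases Finset.mem_insert.mp hc with rfl | hcD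
          · rw [dist_comm]; exact haux a haD
          · have := hH a c
            have := hDsep a haD c hcD hac
            linarith
      refine main S y b ⟨y, hyS⟩ hyS hbS hyb hDS hsep _ hgain ?_
      have hcard : (S.card : ℝ) ≤ (N : ℝ) + 1 := by
        have := Finset.card_insert_le y D
        have : (S.card : ℝ) ≤ (D.card : ℝ) + 1 := by exact_mod_cast this
        linarith
      have hc : (S.card : ℝ) * ((S.card : ℝ) - 1) ≤ ((N:ℝ)+1) * ((N:ℝ)+1-1) := by
        have h0 : (0:ℝ) ≤ (S.card : ℝ) := Nat.cast_nonneg _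
        nlinarith
      nlinarith
  · push_neg at hbx
    by_cases hby : ∃ b' ∈ D, dist b' y < ε/9 ∧ dist (f b') (f y) < ε/9 - δ
    · -- y bad, x good: use S = insert x D, pair (x, b')
      obtain ⟨b', hb'D, hby1, hby2⟩ := hby
      have hgain : dist x b' + (ε - 2*(ε/9) + δ) ≤ dist (f x) (f b') := by
        have t1 : dist (f x) (f y) ≤ dist (f x) (f b') + dist (f b') (f y) := dist_triangle _ _ _
        have t2 : dist x b' ≤ dist x y + dist y b' := dist_triangle _ _ _
        have e2 : dist y b' = dist b' y := dist_comm _ _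
        linarith
      have hxb' : x ≠ b' := by
        intro h
        rw [h] at hgain
        simp at hgain
        linarith
      set S : Finset X := insert x D with hS
      have hxS : x ∈ S := Finset.mem_insert_self x D
      have hbS : b' ∈ S := Finset.mem_insert_of_mem hb'D
      have hDS : D ⊆ S := Finset.subset_insert x D
      have hsep : ∀ a ∈ S, ∀ c ∈ S, a ≠ c → ε/9 - δ ≤ dist (f a) (f c) := by
        have haux : ∀ c ∈ D, ε/9 - δ ≤ dist (f x) (f c) := by
          intro c hc
          by_cases hd : dist c x < ε/9
          · have := hbx c hc hd
            rw [dist_comm (f x) (f c)]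
            linarith
          · push_neg at hd
            have := hH x c
            rw [dist_comm x c] at this
            linarith
        intro a ha c hc hac
        rcases Finset.mem_insert.mp ha with rfl | haD
        · rcases Finset.mem_insert.mp hc with rfl | hcD
          · exact absurd rfl hac
          · exact haux c hcD
        · rcases Finset.mem_insert.mp hc with rfl | hcD
          · rw [dist_comm]; exact haux a haD
          · have := hH a c
            have := hDsep a haD c hcD hac
            linarith
      refine main S x b' ⟨x, hxS⟩ hxS hbS hxb' hDS hsep _ hgain ?_
      have hcard : (S.card : ℝ) ≤ (N : ℝ) + 1 := by
        have := Finset.card_insert_le x D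
        have : (S.card : ℝ) ≤ (D.card : ℝ) + 1 := by exact_mod_cast this
        linarith
      have hc : (S.card : ℝ) * ((S.card : ℝ) - 1) ≤ ((N:ℝ)+1) * ((N:ℝ)+1-1) := by
        have h0 : (0:ℝ) ≤ (S.card : ℝ) := Nat.cast_nonneg _
        nlinarith
      nlinarith
    · -- both good: use S = insert x (insert y D), pair (x, y)
      push_neg at hby
      have hxyne : x ≠ y := by
        intro h
        rw [h] at hxy
        simp at hxy
        linarith
      set S : Finset X := insert x (insert y D) with hS
      have hxS : x ∈ S := Finset.mem_insert_self x _
      have hyS : y ∈ S := Finset.mem_insert_of_mem (Finset.mem_insert_self y D)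
      have hDS : D ⊆ S := fun a ha =>
        Finset.mem_insert_of_mem (Finset.mem_insert_of_mem ha)
      have hauxx : ∀ c ∈ D, ε/9 - δ ≤ dist (f x) (f c) := by
        intro c hc
        by_cases hd : dist c x < ε/9
        · have := hbx c hc hd
          rw [dist_comm (f x) (f c)]
          linarith
        · push_neg at hd
          have := hH x c
          rw [dist_comm x c] at this
          linarith
      have hauxy : ∀ c ∈ D, ε/9 - δ ≤ dist (f y) (f c) := by
        intro c hc
        by_cases hd : dist c y < ε/9
        · have := hby c hc hd
          rw [dist_comm (f y) (f c)]
          linarith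
        · push_neg at hd
          have := hH y c
          rw [dist_comm y c] at this
          linarith
      have hfxy : ε/9 - δ ≤ dist (f x) (f y) := by
        have : (0:ℝ) ≤ dist x y := dist_nonneg
        linarith
      have hsep : ∀ a ∈ S, ∀ c ∈ S, a ≠ c → ε/9 - δ ≤ dist (f a) (f c) := by
        intro a ha c hc hac
        rcases Finset.mem_insert.mp ha with rfl | ha'
        · rcases Finset.mem_insert.mp hc with rfl | hc'
          · exact absurd rfl hac
          · rcases Finset.mem_insert.mp hc' with rfl | hcD
            · exact hfxy
            · exact hauxx c hcD
        · rcases Finset.mem_insert.mp ha' with rfl | haD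
          · rcases Finset.mem_insert.mp hc with rfl | hc'
            · rw [dist_comm]; exact hfxy
            · rcases Finset.mem_insert.mp hc' with rfl | hcD
              · exact absurd rfl hac
              · exact hauxy c hcD
          · rcases Finset.mem_insert.mp hc with rfl | hc'
            · rw [dist_comm]; exact hauxx a haD
            · rcases Finset.mem_insert.mp hc' with rfl | hcD
              · rw [dist_comm]; exact hauxy a haD
              · have := hH a c
                have := hDsep a haD c hcD hac
                linarith
      refine main S x y ⟨x, hxS⟩ hxS hyS hxyne hDS hsep ε hxy ?_
      have hcard : (S.card : ℝ) ≤ (N : ℝ) + 2 := by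
        have h1 := Finset.card_insert_le x (insert y D)
        have h2 := Finset.card_insert_le y D
        have : S.card ≤ D.card + 2 := by
          calc S.card ≤ (insert y D).card + 1 := h1
            _ ≤ D.card + 1 + 1 := by omega
            _ = D.card + 2 := by omega
        have : (S.card : ℝ) ≤ (D.card : ℝ) + 2 := by exact_mod_cast this
        linarith
      have hc : (S.card : ℝ) * ((S.card : ℝ) - 1) ≤ ((N:ℝ)+2) * ((N:ℝ)+2-1) := by
        have h0 : (0:ℝ) ≤ (S.card : ℝ) := Nat.cast_nonneg _
        nlinarith
      nlinarith
end

section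
/- Let X, Y be totally bounded metric spaces with s(X, δ) ≥ s(Y, δ) for every δ > 0, where s(Z, δ) is the supremum over nonempty finite δ-separated subsets B of Z of the sum of pairwise distances of B. Then the pair (X, Y) is uniformly strongly plastic: for every ε > 0 there exists δ₀ > 0 such that for every map f : X → Y, if d(f(x), f(y)) > d(x, y) + ε for some x, y ∈ X, then d(f(x̃), f(ỹ)) < d(x̃, ỹ) − δ₀ for some x̃, ỹ ∈ X. -/
lemma isSeparated'_mono {Z : Type*} [MetricSpace Z] {s t : ℝ} (hst : s ≤ t)
    {A : Set Z} (hA : IsSeparated' t A) : IsSeparated' s A :=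
  fun a ha b hb hab => le_trans hst (hA a ha b hb hab)

lemma sigmaSum_nonneg {Z : Type*} [MetricSpace Z] (A : Finset Z) : 0 ≤ sigmaSum A :=
  Finset.sum_nonneg fun _ _ => Finset.sum_nonneg fun _ _ => dist_nonneg

lemma sep_card_bound {Z : Type*} [MetricSpace Z] (htb : TotallyBounded (Set.univ : Set Z))
    {r : ℝ} (hr : 0 < r) : ∃ K : ℕ, ∀ A : Finset Z, IsSeparated' r (A : Set Z) → A.card ≤ K := by
  obtain ⟨t, htfin, htcov⟩ := Metric.totallyBounded_iff.mp htb (r/3) (by positivity)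
  refine ⟨htfin.toFinset.card, fun A hA => ?_⟩
  have hsel : ∀ a : Z, ∃ c, c ∈ t ∧ dist a c < r/3 := by
    intro a
    have hmem := htcov (Set.mem_univ a)
    rw [Set.mem_iUnion₂] at hmem
    obtain ⟨c, hc, hball⟩ := hmem
    exact ⟨c, hc, by simpa [Metric.mem_ball] using hball⟩
  choose g hg hgd using hsel
  refine Finset.card_le_card_of_injOn g (fun a _ => htfin.mem_toFinset.mpr (hg a)) ?_
  intro a ha b hb hab
  by_contra hne
  have h1 := hA a (Finset.mem_coe.mpr ha) b (Finset.mem_coe.mpr hb) hne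
  have h2 : dist a b ≤ dist a (g a) + dist (g b) b := by
    calc dist a b ≤ dist a (g a) + dist (g a) b := dist_triangle _ _ _
    _ = dist a (g a) + dist (g b) b := by rw [hab]
  linarith [hgd a, hgd b, dist_comm (g b) b]

lemma exists_flat (φ : ℕ → ℝ) (C κ : ℝ) (m : ℕ)
    (h0 : φ 0 ≤ C) (hlast : 0 ≤ φ m) (hκ : C < m * κ) :
    ∃ i < m, φ i - φ (i+1) ≤ κ := by
  by_contra hcon
  push_neg at hcon
  have hm : m ≠ 0 := by rintro rfl; simp at hκ; linarith
  have hsum : ∑ i ∈ Finset.range m, (φ i - φ (i+1)) = φ 0 - φ m := Finset.sum_range_sub' φ m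
  have hlt : ∑ _i ∈ Finset.range m, κ < ∑ i ∈ Finset.range m, (φ i - φ (i+1)) :=
    Finset.sum_lt_sum_of_nonempty (Finset.nonempty_range_iff.mpr hm)
      (fun i hi => hcon i (Finset.mem_range.mp hi))
  rw [Finset.sum_const, Finset.card_range, nsmul_eq_mul, hsum] at hlt
  linarith

set_option maxHeartbeats 1000000 in
theorem uniformly_strongly_plastic_pair_of_sSep_le
    (X Y : Type*) [MetricSpace X] [MetricSpace Y]
    (hXtb : TotallyBounded (Set.univ : Set X))
    (hYtb : TotallyBounded (Set.univ : Set Y))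
    (h : ∀ δ : ℝ, 0 < δ → sSep Y δ ≤ sSep X δ) :
    ∀ ε : ℝ, 0 < ε → ∃ δ₀ : ℝ, 0 < δ₀ ∧
      ∀ f : X → Y, (∃ x y : X, dist (f x) (f y) > dist x y + ε) →
        ∃ x y : X, dist (f x) (f y) < dist x y - δ₀ := by
  classical
  intro ε hε
  obtain ⟨KX, hKX⟩ := sep_card_bound hXtb (show (0:ℝ) < ε/16 by positivity)
  obtain ⟨KY, hKY⟩ := sep_card_bound hYtb (show (0:ℝ) < ε/16 by positivity)
  obtain ⟨DY, hDY0, hDY⟩ : ∃ D : ℝ, 0 ≤ D ∧ ∀ a b : Y, dist a b ≤ D := by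
    obtain ⟨C, hC⟩ := Metric.isBounded_iff.mp hYtb.isBounded
    exact ⟨max C 0, le_max_right _ _,
      fun a b => le_trans (hC (Set.mem_univ a) (Set.mem_univ b)) (le_max_left _ _)⟩
  set C : ℝ := (KY:ℝ)^2 * DY with hCdef
  -- every element of the defining set of `sSep Y t` for `t ≥ ε/16` is at most `C`
  have hmemY : ∀ t : ℝ, ε/16 ≤ t → ∀ s ∈ { s : ℝ | ∃ B : Finset Y, B.Nonempty ∧
      IsSeparated' t (B : Set Y) ∧ s = sigmaSum B }, s ≤ C := by
    rintro t ht s ⟨B, _, hBsep, rfl⟩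
    have hcard : (B.card : ℝ) ≤ KY := Nat.cast_le.mpr (hKY B (isSeparated'_mono ht hBsep))
    have hcn : (0:ℝ) ≤ B.card := Nat.cast_nonneg _
    have h1 : sigmaSum B ≤ (B.card:ℝ) * ((B.card:ℝ) * DY) := by
      calc sigmaSum B ≤ ∑ _a ∈ B, ∑ _b ∈ B, DY :=
            Finset.sum_le_sum fun a _ => Finset.sum_le_sum fun b _ => hDY a b
        _ = (B.card:ℝ) * ((B.card:ℝ) * DY) := by
            simp [Finset.sum_const, nsmul_eq_mul]
    have h2 : (B.card:ℝ) * ((B.card:ℝ) * DY) ≤ C := by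
      rw [hCdef, sq]
      nlinarith [mul_le_mul hcard hcard hcn (Nat.cast_nonneg (α := ℝ) KY), hDY0]
    linarith
  have hbddY : ∀ t : ℝ, ε/16 ≤ t → BddAbove { s : ℝ | ∃ B : Finset Y, B.Nonempty ∧
      IsSeparated' t (B : Set Y) ∧ s = sigmaSum B } :=
    fun t ht => ⟨C, fun s hs => hmemY t ht s hs⟩
  have hCnn : (0:ℝ) ≤ C := by rw [hCdef]; positivity
  have hYle : ∀ t : ℝ, ε/16 ≤ t → sSep Y t ≤ C :=
    fun t ht => Real.sSup_le (hmemY t ht) hCnn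
  have hYnn : ∀ t : ℝ, 0 ≤ sSep Y t := by
    intro t
    apply Real.sSup_nonneg
    rintro s ⟨B, _, _, rfl⟩
    exact sigmaSum_nonneg B
  have hmonoY : ∀ t₁ t₂ : ℝ, ε/16 ≤ t₁ → t₁ ≤ t₂ → sSep Y t₂ ≤ sSep Y t₁ := by
    intro t₁ t₂ ht₁ h12
    apply Real.sSup_le ?_ (hYnn t₁)
    rintro s ⟨B, hBne, hBsep, rfl⟩
    exact le_csSup (hbddY t₁ ht₁) ⟨B, hBne, isSeparated'_mono h12 hBsep, rfl⟩
  set m : ℕ := ⌈C/(ε/64)⌉₊ + 1 with hmdef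
  have hκpos : (0:ℝ) < ε/64 := by positivity
  have hmκ : C < m * (ε/64) := by
    have h1 : C/(ε/64) ≤ (⌈C/(ε/64)⌉₊ : ℝ) := Nat.le_ceil _
    have h2 : C/(ε/64) < (m:ℝ) := by rw [hmdef]; push_cast; linarith
    calc C = (C/(ε/64))*(ε/64) := by field_simp
      _ < m*(ε/64) := by exact mul_lt_mul_of_pos_right h2 hκpos
  set step : ℝ := (ε/16)/m with hstepdef
  have hm1 : 1 ≤ m := Nat.le_add_left 1 _
  have hmpos : (0:ℝ) < m := by exact_mod_cast Nat.lt_of_lt_of_le Nat.zero_lt_one hm1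
  have hsteppos : 0 < step := by rw [hstepdef]; positivity
  obtain ⟨i, him, hflat⟩ := exists_flat (fun j => sSep Y (ε/16 + j*step)) C (ε/64) m
    (by simpa using hYle (ε/16) le_rfl) (hYnn _) hmκ
  have hflat0 : sSep Y (ε/16 + (i:ℝ)*step) - sSep Y (ε/16 + ((i+1:ℕ):ℝ)*step) ≤ ε/64 := hflat
  set tp : ℝ := ε/16 + i*step with htpdef
  set δ : ℝ := ε/16 + ((i:ℝ)+1)*step with hδdef
  have hflat' : sSep Y tp - sSep Y δ ≤ ε/64 := by
    have hcst : ((i+1 : ℕ) : ℝ) = (i:ℝ) + 1 := by push_cast; ring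
    rw [htpdef, hδdef]
    rw [hcst] at hflat0
    exact hflat0
  have htp16 : ε/16 ≤ tp := by
    rw [htpdef]
    nlinarith [mul_nonneg (Nat.cast_nonneg (α := ℝ) i) hsteppos.le]
  have hδtp : δ = tp + step := by rw [hδdef, htpdef]; ring
  have hδ8 : δ ≤ ε/8 := by
    have h1 : ((i:ℝ)+1) ≤ (m:ℝ) := by exact_mod_cast Nat.succ_le_of_lt him
    have h2 : ((i:ℝ)+1)*step ≤ (m:ℝ)*step := mul_le_mul_of_nonneg_right h1 hsteppos.le
    have hms : (m:ℝ)*step = ε/16 := by rw [hstepdef]; field_simp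
    rw [hδdef]; linarith
  have hδ16 : ε/16 < δ := by
    rw [hδdef]
    nlinarith [mul_nonneg (Nat.cast_nonneg (α := ℝ) i) hsteppos.le]
  set δ₀ : ℝ := min step (ε/(64*((KX:ℝ)^2+1))) with hδ₀def
  have hKXnn : (0:ℝ) ≤ (KX:ℝ)^2 := by positivity
  have hδ₀pos : 0 < δ₀ := lt_min hsteppos (by positivity)
  have hδ₀step : δ₀ ≤ step := min_le_left _ _
  have hδ₀small : δ₀ * ((KX:ℝ)^2+1) ≤ ε/64 := by
    have h1 : δ₀ ≤ ε/(64*((KX:ℝ)^2+1)) := min_le_right _ _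
    have h2 : (0:ℝ) < (KX:ℝ)^2+1 := by positivity
    calc δ₀*((KX:ℝ)^2+1) ≤ (ε/(64*((KX:ℝ)^2+1)))*((KX:ℝ)^2+1) :=
          mul_le_mul_of_nonneg_right h1 h2.le
      _ = ε/64 := by field_simp
  have hδ₀64 : δ₀ ≤ ε/64 := by nlinarith [hδ₀pos.le, hKXnn]
  clear_value C m step tp δ δ₀
  refine ⟨δ₀, hδ₀pos, ?_⟩
  rintro f ⟨x₀, y₀, hexp⟩
  by_contra hcontra
  push_neg at hcontra
  have hcon : ∀ x y : X, dist x y - δ₀ ≤ dist (f x) (f y) := hcontra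
  have hδpos : (0:ℝ) < δ := lt_trans (by positivity) hδ16
  have hSXne : ({ s : ℝ | ∃ B : Finset X, B.Nonempty ∧ IsSeparated' δ (B : Set X) ∧
      s = sigmaSum B }).Nonempty := by
    refine ⟨sigmaSum {x₀}, {x₀}, Finset.singleton_nonempty x₀, ?_, rfl⟩
    intro a ha b hb hab
    simp only [Finset.coe_singleton, Set.mem_singleton_iff] at ha hb
    exact absurd (ha.trans hb.symm) hab
  obtain ⟨s, hsmem, hBopt⟩ :=
    exists_lt_of_lt_csSup hSXne (show sSep X δ - ε/64 < sSep X δ by linarith)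
  obtain ⟨B, hBne, hBsep, rfl⟩ := hsmem
  have hcardB : (B.card : ℝ) ≤ KX := Nat.cast_le.mpr (hKX B (isSeparated'_mono hδ16.le hBsep))
  have hδ₀δ : δ₀ < δ := by linarith
  have hinj : Set.InjOn f (B : Set X) := by
    intro a ha b hb hfe
    by_contra hne
    have h1 := hBsep a ha b hb hne
    have h2 := hcon a b
    rw [hfe, dist_self] at h2
    linarith
  have hsum_im : sigmaSum (B.image f) = ∑ a ∈ B, ∑ b ∈ B, dist (f a) (f b) := by
    unfold sigmaSum
    rw [Finset.sum_image (fun x hx y hy => hinj hx hy)]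
    exact Finset.sum_congr rfl fun a _ => Finset.sum_image (fun x hx y hy => hinj hx hy)
  have hsepIm : IsSeparated' (δ - δ₀) ((B.image f : Finset Y) : Set Y) := by
    intro a ha b hb hab
    rw [Finset.coe_image] at ha hb
    obtain ⟨a', ha', rfl⟩ := ha
    obtain ⟨b', hb', rfl⟩ := hb
    have hne : a' ≠ b' := fun hh => hab (by rw [hh])
    have h1 := hBsep a' ha' b' hb' hne
    have h2 := hcon a' b'
    linarith
  have hδδ₀16 : ε/16 ≤ δ - δ₀ := by linarith
  have hY2 : sSep Y (δ - δ₀) ≤ sSep X δ + ε/64 := by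
    have m2 : sSep Y (δ - δ₀) ≤ sSep Y tp := hmonoY tp (δ - δ₀) htp16 (by linarith)
    have m4 : sSep Y δ ≤ sSep X δ := h δ hδpos
    linarith
  have hup : sigmaSum (B.image f) ≤ sSep X δ + ε/64 := by
    have m1 : sigmaSum (B.image f) ≤ sSep Y (δ - δ₀) :=
      le_csSup (hbddY _ hδδ₀16) ⟨B.image f, hBne.image f, hsepIm, rfl⟩
    linarith
  have hlow : sigmaSum B - (B.card:ℝ)*(B.card:ℝ)*δ₀ ≤ sigmaSum (B.image f) := by
    rw [hsum_im]
    have heq : ∑ a ∈ B, ∑ b ∈ B, (dist a b - δ₀)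
        = sigmaSum B - (B.card:ℝ)*(B.card:ℝ)*δ₀ := by
      unfold sigmaSum
      simp [Finset.sum_sub_distrib, Finset.sum_const, nsmul_eq_mul]
      ring
    calc sigmaSum B - (B.card:ℝ)*(B.card:ℝ)*δ₀ = ∑ a ∈ B, ∑ b ∈ B, (dist a b - δ₀) := heq.symm
      _ ≤ ∑ a ∈ B, ∑ b ∈ B, dist (f a) (f b) :=
          Finset.sum_le_sum fun a _ => Finset.sum_le_sum fun b _ => hcon a b
  have hn2 : (B.card:ℝ)*(B.card:ℝ)*δ₀ ≤ ε/64 := by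
    have hcn : (0:ℝ) ≤ B.card := Nat.cast_nonneg _
    have h1 : (B.card:ℝ)*(B.card:ℝ) ≤ (KX:ℝ)^2 := by nlinarith [hcardB, hcn]
    have h2 : (B.card:ℝ)*(B.card:ℝ)*δ₀ ≤ (KX:ℝ)^2*δ₀ :=
      mul_le_mul_of_nonneg_right h1 hδ₀pos.le
    nlinarith [hδ₀pos.le]
  have hnet : ∀ w : Y, ∃ b ∈ B, dist w (f b) < δ - δ₀ := by
    intro w
    by_contra hw
    push_neg at hw
    have hw' : ∀ c ∈ B.image f, δ - δ₀ ≤ dist w c := by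
      intro c hc
      obtain ⟨b, hb, rfl⟩ := Finset.mem_image.mp hc
      exact hw b hb
    have hwB : w ∉ B.image f := by
      intro hmem
      have := hw' w hmem
      rw [dist_self] at this
      linarith
    have hins : sigmaSum (insert w (B.image f))
        = sigmaSum (B.image f) + 2 * ∑ c ∈ B.image f, dist w c := by
      unfold sigmaSum
      rw [Finset.sum_insert hwB, Finset.sum_insert hwB, dist_self]
      have hrec : ∀ a ∈ B.image f, ∑ b ∈ insert w (B.image f), dist a b
          = dist a w + ∑ b ∈ B.image f, dist a b := fun a _ => Finset.sum_insert hwB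
      rw [Finset.sum_congr rfl hrec, Finset.sum_add_distrib]
      have hcomm : ∑ a ∈ B.image f, dist a w = ∑ a ∈ B.image f, dist w a :=
        Finset.sum_congr rfl fun a _ => dist_comm a w
      rw [hcomm]
      ring
    have hgain : δ - δ₀ ≤ ∑ c ∈ B.image f, dist w c := by
      obtain ⟨b0, hb0⟩ := hBne
      have hb0' : f b0 ∈ B.image f := Finset.mem_image_of_mem f hb0
      have hs := Finset.single_le_sum (f := fun c => dist w c)
        (fun c _ => dist_nonneg) hb0'
      exact le_trans (hw b0 hb0) hs
    have hsep' : IsSeparated' (δ - δ₀) ((insert w (B.image f) : Finset Y) : Set Y) := by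
      intro a ha b hb hab
      rw [Finset.coe_insert] at ha hb
      rcases ha with rfl | ha
      · rcases hb with rfl | hb
        · exact absurd rfl hab
        · exact hw' b hb
      · rcases hb with rfl | hb
        · rw [dist_comm]; exact hw' a ha
        · exact hsepIm a ha b hb hab
    have hmem' : sigmaSum (insert w (B.image f)) ≤ sSep Y (δ - δ₀) :=
      le_csSup (hbddY _ hδδ₀16) ⟨_, Finset.insert_nonempty _ _, hsep', rfl⟩
    linarith
  obtain ⟨b₁, hb₁B, hb₁⟩ := hnet (f x₀)
  obtain ⟨b₂, hb₂B, hb₂⟩ := hnet (f y₀)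
  have e₁ : dist x₀ b₁ < δ := by
    have := hcon x₀ b₁
    linarith
  have e₂ : dist y₀ b₂ < δ := by
    have := hcon y₀ b₂
    linarith
  have tri1 : dist (f x₀) (f y₀) ≤ dist (f x₀) (f b₁) + dist (f b₁) (f b₂) + dist (f b₂) (f y₀) :=
    dist_triangle4 _ _ _ _
  have tri2 : dist b₁ b₂ ≤ dist b₁ x₀ + dist x₀ y₀ + dist y₀ b₂ := dist_triangle4 _ _ _ _
  have hc1 : dist (f b₂) (f y₀) = dist (f y₀) (f b₂) := dist_comm _ _
  have hc2 : dist b₁ x₀ = dist x₀ b₁ := dist_comm _ _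
  have hpair : dist (f b₁) (f b₂) - dist b₁ b₂ + δ₀
      ≤ (sigmaSum (B.image f) - sigmaSum B) + (B.card:ℝ)*(B.card:ℝ)*δ₀ := by
    have hnn : ∀ p ∈ B ×ˢ B, 0 ≤ dist (f p.1) (f p.2) - dist p.1 p.2 + δ₀ :=
      fun p _ => by linarith [hcon p.1 p.2]
    have hmem : (b₁, b₂) ∈ B ×ˢ B := Finset.mem_product.mpr ⟨hb₁B, hb₂B⟩
    have hsingle := Finset.single_le_sum hnn hmem
    have hsumeq : ∑ p ∈ B ×ˢ B, (dist (f p.1) (f p.2) - dist p.1 p.2 + δ₀)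
        = (sigmaSum (B.image f) - sigmaSum B) + (B.card:ℝ)*(B.card:ℝ)*δ₀ := by
      rw [hsum_im]
      unfold sigmaSum
      rw [Finset.sum_product]
      simp [Finset.sum_add_distrib, Finset.sum_sub_distrib, Finset.sum_const, nsmul_eq_mul]
      ring
    calc dist (f b₁) (f b₂) - dist b₁ b₂ + δ₀
        ≤ ∑ p ∈ B ×ˢ B, (dist (f p.1) (f p.2) - dist p.1 p.2 + δ₀) := hsingle
      _ = _ := hsumeq
  linarith [hpair, hup, hBopt, hn2, hδ8, hδ₀pos]
end
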